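/- For any even forest G, a(G) = ∑_{H ∈ S(G)} b(L(H)), where S(G) is the set of all spanning subgraphs of G without isolated vertices and L(H) is the line graph of H. -/

import Mathlib

open scoped Classical

/-- A graph is *even* if every connected component has an even number of vertices. -/
def SimpleGraph.IsEvenGraph {V : Type*} (G : SimpleGraph V) : Prop :=
  ∀ c : G.ConnectedComponent, Even (Nat.card c.supp)

/-- A graph is *odd* if every connected component has an odd number of vertices. -/
def SimpleGraph.IsOddGraph {V : Type*} (G : SimpleGraph V) : Prop :=
  ∀ c : G.ConnectedComponent, Odd (Nat.card c.supp)

/-- The number of connected components of a graph. -/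
noncomputable def SimpleGraph.kappa {V : Type*} (G : SimpleGraph V) : ℕ :=
  Nat.card G.ConnectedComponent

/-- The `a`-number of the induced subgraph `G[s]`, defined recursively:
`1` for the null graph, `0` if `G[s]` is not even, and minus the sum of the
`a`-numbers of all proper induced subgraphs otherwise. -/
noncomputable def aNum {V : Type*} (G : SimpleGraph V) (s : Finset V) : ℤ :=
  if s = ∅ then 1
  else if (G.induce (s : Set V)).IsEvenGraph then
    - ∑ t ∈ (s.powerset.filter (· ≠ s)).attach, aNum G t.1
  else 0
termination_by s.card
decreasing_by
  have h := t.2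
  simp only [Finset.mem_filter, Finset.mem_powerset] at h
  exact Finset.card_lt_card (lt_of_le_of_ne h.1 h.2)

/-- The `b`-number of the induced subgraph `G[s]`, defined recursively:
`1` for the null graph, `0` if `G[s]` is not odd, and minus the sum of the
`b`-numbers of all proper induced subgraphs otherwise. -/
noncomputable def bNum {V : Type*} (G : SimpleGraph V) (s : Finset V) : ℤ :=
  if s = ∅ then 1
  else if (G.induce (s : Set V)).IsOddGraph then
    - ∑ t ∈ (s.powerset.filter (· ≠ s)).attach, bNum G t.1
  else 0
termination_by s.card
decreasing_by
  have h := t.2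
  simp only [Finset.mem_filter, Finset.mem_powerset] at h
  exact Finset.card_lt_card (lt_of_le_of_ne h.1 h.2)

/-- The `a`-number of a finite graph `G`. -/
noncomputable def aNumber {V : Type*} [Fintype V] (G : SimpleGraph V) : ℤ :=
  aNum G Finset.univ

/-- The `b`-number of a finite graph `G`. -/
noncomputable def bNumber {V : Type*} [Fintype V] (G : SimpleGraph V) : ℤ :=
  bNum G Finset.univ

section Rec
variable {V : Type*} (G : SimpleGraph V) (s : Finset V)

lemma aNum_empty : aNum G ∅ = 1 := by rw [aNum]; simp

lemma bNum_empty : bNum G ∅ = 1 := by rw [bNum]; simp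

lemma aNum_of_not_even (hs : s ≠ ∅) (h : ¬ (G.induce (s : Set V)).IsEvenGraph) :
    aNum G s = 0 := by rw [aNum, if_neg hs, if_neg h]

lemma bNum_of_not_odd (hs : s ≠ ∅) (h : ¬ (G.induce (s : Set V)).IsOddGraph) :
    bNum G s = 0 := by rw [bNum, if_neg hs, if_neg h]

lemma aNum_eq_neg_sum (hs : s ≠ ∅) (h : (G.induce (s : Set V)).IsEvenGraph) :
    aNum G s = - ∑ t ∈ s.powerset.filter (· ≠ s), aNum G t := by
  rw [aNum, if_neg hs, if_pos h, Finset.sum_attach]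

lemma bNum_eq_neg_sum (hs : s ≠ ∅) (h : (G.induce (s : Set V)).IsOddGraph) :
    bNum G s = - ∑ t ∈ s.powerset.filter (· ≠ s), bNum G t := by
  rw [bNum, if_neg hs, if_pos h, Finset.sum_attach]

lemma filter_powerset_eq (s : Finset V) :
    s.powerset.filter (· = s) = {s} := by
  ext t
  simp only [Finset.mem_filter, Finset.mem_powerset, Finset.mem_singleton]
  exact ⟨fun h => h.2, fun h => ⟨h ▸ le_rfl, h⟩⟩

lemma sum_powerset_aNum (hs : s ≠ ∅) (h : (G.induce (s : Set V)).IsEvenGraph) :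
    ∑ t ∈ s.powerset, aNum G t = 0 := by
  rw [← Finset.sum_filter_add_sum_filter_not s.powerset (· = s), filter_powerset_eq,
    Finset.sum_singleton, aNum_eq_neg_sum G s hs h]
  simp [Finset.filter_congr (fun x _ => Iff.rfl : ∀ x ∈ s.powerset, ¬ x = s ↔ x ≠ s)]

lemma sum_powerset_bNum (hs : s ≠ ∅) (h : (G.induce (s : Set V)).IsOddGraph) :
    ∑ t ∈ s.powerset, bNum G t = 0 := by
  rw [← Finset.sum_filter_add_sum_filter_not s.powerset (· = s), filter_powerset_eq,
    Finset.sum_singleton, bNum_eq_neg_sum G s hs h]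
  simp [Finset.filter_congr (fun x _ => Iff.rfl : ∀ x ∈ s.powerset, ¬ x = s ↔ x ≠ s)]

end Rec
section Iso

lemma isOddGraph_of_iso {W W' : Type*} {K : SimpleGraph W} {K' : SimpleGraph W'}
    (e : K ≃g K') (h : K.IsOddGraph) : K'.IsOddGraph := by
  intro c
  obtain ⟨c₀, rfl⟩ := e.connectedComponentEquiv.surjective c
  have := h c₀
  rwa [Nat.card_congr (SimpleGraph.ConnectedComponent.isoEquivSupp e c₀)] at this

lemma bNum_congr : ∀ (n : ℕ) {W W' : Type*} (K : SimpleGraph W) (K' : SimpleGraph W')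
    (f : W → W') (s : Finset W) (s' : Finset W'), s.card = n → Set.InjOn f ↑s →
    s.image f = s' → (∀ a ∈ s, ∀ b ∈ s, K.Adj a b ↔ K'.Adj (f a) (f b)) →
    bNum K s = bNum K' s' := by
  intro n
  induction n using Nat.strong_induction_on with
  | _ n IH =>
    intro W W' K K' f s s' hn hinj him hadj
    by_cases hs : s = ∅
    · subst hs
      simp only [Finset.image_empty] at him
      rw [← him, bNum_empty, bNum_empty]
    have hs' : s' ≠ ∅ := by
      rw [← him]
      simpa using hs
    -- the isomorphism between the two induced graphs
    have hbij : Set.BijOn f ↑s ↑s' := by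
      rw [← him, Finset.coe_image]
      exact hinj.bijOn_image
    let e : (K.induce (↑s : Set W)) ≃g (K'.induce (↑s' : Set W')) :=
      { toEquiv := hbij.equiv f
        map_rel_iff' := by
          rintro ⟨a, ha⟩ ⟨b, hb⟩
          simp only [SimpleGraph.comap_adj, Function.Embedding.coe_subtype]
          exact (hadj a ha b hb).symm }
    have hparity : (K.induce (↑s : Set W)).IsOddGraph ↔ (K'.induce (↑s' : Set W')).IsOddGraph :=
      ⟨isOddGraph_of_iso e, isOddGraph_of_iso e.symm⟩
    by_cases hodd : (K.induce (↑s : Set W)).IsOddGraph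
    · rw [bNum_eq_neg_sum K s hs hodd, bNum_eq_neg_sum K' s' hs' (hparity.mp hodd)]
      congr 1
      refine Finset.sum_nbij' (fun t => t.image f) (fun t' => s.filter (f · ∈ t')) ?_ ?_ ?_ ?_ ?_
      · intro t ht
        simp only [Finset.mem_filter, Finset.mem_powerset] at ht ⊢
        refine ⟨him ▸ Finset.image_subset_image ht.1, fun hcon => ht.2 ?_⟩
        refine Finset.eq_of_subset_of_card_le ht.1 ?_
        have h1 : (t.image f).card = t.card :=
          Finset.card_image_of_injOn (hinj.mono (by exact_mod_cast ht.1))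
        have h2 : (s.image f).card = s.card := Finset.card_image_of_injOn hinj
        rw [← h2, him, ← hcon, h1]
      · intro t' ht'
        simp only [Finset.mem_filter, Finset.mem_powerset] at ht' ⊢
        refine ⟨Finset.filter_subset _ _, fun hcon => ht'.2 ?_⟩
        apply Finset.Subset.antisymm ht'.1
        rw [← him]
        intro y hy
        simp only [Finset.mem_image] at hy
        obtain ⟨x, hx, rfl⟩ := hy
        rw [← hcon] at hx
        exact (Finset.mem_filter.mp hx).2
      · intro t ht
        simp only [Finset.mem_filter, Finset.mem_powerset] at ht
        ext x
        simp only [Finset.mem_filter, Finset.mem_image]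
        constructor
        · rintro ⟨hxs, y, hy, hxy⟩
          rwa [← hinj (by exact_mod_cast ht.1 hy) (by exact_mod_cast hxs) hxy]
        · intro hx
          exact ⟨ht.1 hx, x, hx, rfl⟩
      · intro t' ht'
        simp only [Finset.mem_filter, Finset.mem_powerset] at ht'
        ext y
        simp only [Finset.mem_image, Finset.mem_filter]
        constructor
        · rintro ⟨x, ⟨_, hfx⟩, rfl⟩
          exact hfx
        · intro hy
          have : y ∈ s' := ht'.1 hy
          rw [← him] at this
          obtain ⟨x, hx, rfl⟩ := Finset.mem_image.mp this
          exact ⟨x, ⟨hx, hy⟩, rfl⟩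
      · intro t ht
        simp only [Finset.mem_filter, Finset.mem_powerset] at ht
        have hlt : t.card < n := hn ▸ Finset.card_lt_card (lt_of_le_of_ne ht.1 ht.2)
        refine IH t.card hlt K K' f t (t.image f) rfl (hinj.mono (by exact_mod_cast ht.1)) rfl
          (fun a ha b hb => hadj a (ht.1 ha) b (ht.1 hb))
    · rw [bNum_of_not_odd K s hs hodd, bNum_of_not_odd K' s' hs' (fun h => hodd (hparity.mpr h))]

end Iso
section Graphs
open SimpleGraph
variable {V : Type*} [Fintype V] [DecidableEq V] (G : SimpleGraph V)

/-- The spanning subgraph of `G` determined by a set `A` of edges of `G`. -/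
def FA (A : Finset G.edgeSet) : SimpleGraph V where
  Adj u v := u ≠ v ∧ ∃ e ∈ A, u ∈ (e : Sym2 V) ∧ v ∈ (e : Sym2 V)
  symm := ⟨by rintro u v ⟨h, e, he, hu, hv⟩; exact ⟨h.symm, e, he, hv, hu⟩⟩
  loopless := ⟨by rintro u ⟨h, -⟩; exact h rfl⟩

variable {G}
set_option linter.unusedSectionVars false

lemma FA_le (A : Finset G.edgeSet) : FA G A ≤ G := by
  rintro u v ⟨hne, e, he, hu, hv⟩
  have : (e : Sym2 V) = s(u, v) := (Sym2.mem_and_mem_iff hne).mp ⟨hu, hv⟩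
  exact (G.mem_edgeSet).mp (this ▸ e.2)

/-- The support of a set of edges. -/
def spt (A : Finset G.edgeSet) : Finset V :=
  Finset.univ.filter (fun v => ∃ e ∈ A, v ∈ (e : Sym2 V))

lemma mem_spt {A : Finset G.edgeSet} {v : V} :
    v ∈ spt A ↔ ∃ e ∈ A, v ∈ (e : Sym2 V) := by simp [spt]

lemma exists_other (e : G.edgeSet) {u : V} (hu : u ∈ (e : Sym2 V)) :
    ∃ v, v ∈ (e : Sym2 V) ∧ u ≠ v ∧ (e : Sym2 V) = s(u, v) := by
  obtain ⟨v, hv⟩ := Sym2.mem_iff_exists.mp hu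
  refine ⟨v, ?_, ?_, hv⟩
  · rw [hv]; exact Sym2.mem_mk_right u v
  · intro h
    exact G.not_isDiag_of_mem_edgeSet e.2 (by rw [hv]; exact Sym2.mk_isDiag_iff.mpr h)

lemma spt_empty : spt (∅ : Finset G.edgeSet) = ∅ := by simp [spt]

lemma spt_eq_empty_iff {A : Finset G.edgeSet} : spt A = ∅ ↔ A = ∅ := by
  constructor
  · intro h
    by_contra hA
    obtain ⟨e, he⟩ := Finset.nonempty_iff_ne_empty.mpr hA
    have : (Quot.out (e : Sym2 V)).1 ∈ spt A := mem_spt.mpr ⟨e, he, Sym2.out_fst_mem _⟩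
    simp [h] at this
  · rintro rfl; exact spt_empty

/-- The line graph of the subgraph with edge set `A`, as an induced subgraph of the
line graph of `G`. -/
abbrev KG (G : SimpleGraph V) (A : Finset G.edgeSet) : SimpleGraph (↑A : Set G.edgeSet) :=
  (G.lineGraph).induce (↑A : Set G.edgeSet)

lemma reach_same_edge {A : Finset G.edgeSet} {e : G.edgeSet} (he : e ∈ A) {u w : V}
    (hu : u ∈ (e : Sym2 V)) (hw : w ∈ (e : Sym2 V)) : (FA G A).Reachable u w := by
  by_cases h : u = w
  · subst h; rfl
  · exact (SimpleGraph.Adj.reachable ⟨h, e, he, hu, hw⟩)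

lemma Kreach_of_common {A : Finset G.edgeSet} {x y : G.edgeSet} (hx : x ∈ A) (hy : y ∈ A)
    {u : V} (hux : u ∈ (x : Sym2 V)) (huy : u ∈ (y : Sym2 V)) :
    (KG G A).Reachable ⟨x, Finset.mem_coe.mpr hx⟩ ⟨y, Finset.mem_coe.mpr hy⟩ := by
  by_cases h : x = y
  · subst h; rfl
  · refine SimpleGraph.Adj.reachable ?_
    show G.lineGraph.Adj x y
    exact SimpleGraph.lineGraph_adj_iff_exists.mpr ⟨h, u, hux, huy⟩

lemma reach_to {A : Finset G.edgeSet} {x y : ↥(↑A : Set G.edgeSet)} (p : (KG G A).Walk x y) :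
    ∀ {u v : V}, u ∈ ((x : G.edgeSet) : Sym2 V) → v ∈ ((y : G.edgeSet) : Sym2 V) →
      (FA G A).Reachable u v := by
  induction p with
  | @nil z =>
    intro u v hu hv
    exact reach_same_edge (Finset.mem_coe.mp z.2) hu hv
  | @cons a b c h p ih =>
    intro u v hu hv
    have hadj : G.lineGraph.Adj a.1 b.1 := h
    obtain ⟨-, w, hw1, hw2⟩ := SimpleGraph.lineGraph_adj_iff_exists.mp hadj
    exact (reach_same_edge (Finset.mem_coe.mp a.2) hu hw1).trans (ih hw2 hv)

lemma reach_from {A : Finset G.edgeSet} {u v : V} (p : (FA G A).Walk u v) :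
    ∀ {x y : G.edgeSet} (hx : x ∈ A) (hy : y ∈ A), u ∈ (x : Sym2 V) → v ∈ (y : Sym2 V) →
      (KG G A).Reachable ⟨x, Finset.mem_coe.mpr hx⟩ ⟨y, Finset.mem_coe.mpr hy⟩ := by
  induction p with
  | nil =>
    intro x y hx hy hu hv
    exact Kreach_of_common hx hy hu hv
  | @cons a b c h p ih =>
    intro x y hx hy hu hv
    obtain ⟨hne, e, he, ha, hb⟩ := h
    exact (Kreach_of_common hx he hu ha).trans (ih he hy hb hv)

end Graphs
section Trees
open SimpleGraph
variable {V : Type*} [Fintype V] [DecidableEq V] {G : SimpleGraph V}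
set_option linter.unusedSectionVars false

lemma isAcyclic_mono {H H' : SimpleGraph V} (h : H ≤ H') (hH' : H'.IsAcyclic) : H.IsAcyclic :=
  fun _ c hc => hH' (c.mapLe h) (hc.mapLe h)

lemma isAcyclic_induce {H : SimpleGraph V} (h : H.IsAcyclic) (t : Set V) :
    (H.induce t).IsAcyclic := by
  intro v c hc
  exact h (c.map (SimpleGraph.Embedding.induce (G := H) t).toHom)
    ((SimpleGraph.Walk.map_isCycle_iff_of_injective
      (SimpleGraph.Embedding.induce (G := H) t).injective).mpr hc)

lemma connected_induce_supp (H : SimpleGraph V) (c : H.ConnectedComponent) :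
    (H.induce c.supp).Connected := by
  rw [SimpleGraph.connected_induce_iff,
    SimpleGraph.Subgraph.connected_iff_forall_exists_walk_subgraph]
  refine ⟨?_, ?_⟩
  · obtain ⟨v, hv⟩ := c.exists_rep
    refine ⟨v, ?_⟩
    simp only [SimpleGraph.Subgraph.induce_verts]
    exact hv
  · intro a b ha hb
    simp only [SimpleGraph.Subgraph.induce_verts] at ha hb
    have hreach : H.Reachable a b := by
      rw [SimpleGraph.ConnectedComponent.mem_supp_iff] at ha hb
      exact SimpleGraph.ConnectedComponent.eq.mp (ha.trans hb.symm)
    obtain ⟨p⟩ := hreach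
    refine ⟨p, ?_, ?_⟩
    · rw [p.verts_toSubgraph]
      intro w hw
      have hr : H.Reachable a w := ⟨p.takeUntil w hw⟩
      have ha' : H.connectedComponentMk a = c := ha
      show w ∈ c.supp
      exact (SimpleGraph.ConnectedComponent.sound hr.symm).trans ha'
    · intro x y hxy
      have hx : x ∈ p.toSubgraph.verts := hxy.fst_mem
      have hy : y ∈ p.toSubgraph.verts := hxy.snd_mem
      rw [p.mem_verts_toSubgraph] at hx hy
      have ha' : H.connectedComponentMk a = c := ha
      have hx' : x ∈ c.supp :=
        (SimpleGraph.ConnectedComponent.sound (Reachable.symm ⟨p.takeUntil x hx⟩)).trans ha'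
      have hy' : y ∈ c.supp :=
        (SimpleGraph.ConnectedComponent.sound (Reachable.symm ⟨p.takeUntil y hy⟩)).trans ha'
      exact ⟨hx', hy', p.toSubgraph.adj_sub hxy⟩

lemma walk_in_closed {H : SimpleGraph V} {s : Set V}
    (hcl : ∀ a b, H.Adj a b → a ∈ s ∧ b ∈ s) {w v : V} (p : H.Walk w v) :
    ∀ hv : v ∈ s, ∃ hw : w ∈ s, (H.induce s).Reachable ⟨w, hw⟩ ⟨v, hv⟩ := by
  induction p with
  | nil => intro hv; exact ⟨hv, by rfl⟩
  | @cons a b c h q ih =>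
    intro hv
    obtain ⟨hb, r⟩ := ih hv
    have ha : a ∈ s := (hcl _ _ h).1
    exact ⟨ha, (SimpleGraph.Adj.reachable (by exact h :
      (H.induce s).Adj ⟨a, ha⟩ ⟨b, hb⟩)).trans r⟩

lemma supp_image (H : SimpleGraph V) (s : Set V)
    (hcl : ∀ a b, H.Adj a b → a ∈ s ∧ b ∈ s) {v : V} (hv : v ∈ s) :
    (H.connectedComponentMk v).supp =
      Subtype.val '' ((H.induce s).connectedComponentMk ⟨v, hv⟩).supp := by
  ext w
  simp only [SimpleGraph.ConnectedComponent.mem_supp_iff, Set.mem_image]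
  constructor
  · intro h
    obtain ⟨p⟩ := SimpleGraph.ConnectedComponent.eq.mp h
    obtain ⟨hw, r⟩ := walk_in_closed hcl p hv
    exact ⟨⟨w, hw⟩, SimpleGraph.ConnectedComponent.eq.mpr r, rfl⟩
  · rintro ⟨⟨w', hw'⟩, h, rfl⟩
    have r : (H.induce s).Reachable ⟨w', hw'⟩ ⟨v, hv⟩ := SimpleGraph.ConnectedComponent.eq.mp h
    exact SimpleGraph.ConnectedComponent.eq.mpr
      (r.map (SimpleGraph.Embedding.induce s).toHom)
end Trees
section Central
open SimpleGraph
variable {V : Type*} [Fintype V] [DecidableEq V] {G : SimpleGraph V}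
set_option linter.unusedSectionVars false
set_option maxHeartbeats 1000000

lemma card_component_eq (hG : G.IsAcyclic) {A : Finset G.edgeSet} {e : G.edgeSet} (he : e ∈ A)
    {u : V} (hu : u ∈ (e : Sym2 V)) :
    Nat.card (((KG G A).connectedComponentMk ⟨e, Finset.mem_coe.mpr he⟩).supp) + 1 =
      Nat.card (((FA G A).connectedComponentMk u).supp) := by
  classical
  set D := (FA G A).connectedComponentMk u with hD
  set T := (FA G A).induce D.supp with hT
  set c := (KG G A).connectedComponentMk ⟨e, Finset.mem_coe.mpr he⟩ with hc
  haveI : Fintype ↥(D.supp) := Fintype.ofFinite _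
  haveI : Fintype ↥(T.edgeSet) := Fintype.ofFinite _
  have htree : T.IsTree :=
    ⟨connected_induce_supp _ _, isAcyclic_induce (isAcyclic_mono (FA_le A) hG) _⟩
  -- key facts about edges of T
  have key1 : ∀ Ed : Sym2 ↥(D.supp), Ed ∈ T.edgeSet → Ed.map Subtype.val ∈ G.edgeSet := by
    intro Ed
    induction Ed using Sym2.ind with
    | _ a b =>
      intro hEd
      have hadj : T.Adj a b := T.mem_edgeSet.mp hEd
      have hadj' : (FA G A).Adj a.1 b.1 := hadj
      rw [Sym2.map_pair_eq]
      exact (FA_le A).trans (le_refl G) hadj' |>.symm.symm |> G.mem_edgeSet.mpr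
  have key2 : ∀ (Ed : Sym2 ↥(D.supp)) (hEd : Ed ∈ T.edgeSet),
      (⟨Ed.map Subtype.val, key1 Ed hEd⟩ : G.edgeSet) ∈ A := by
    intro Ed
    induction Ed using Sym2.ind with
    | _ a b =>
      intro hEd
      have hadj : (FA G A).Adj a.1 b.1 := T.mem_edgeSet.mp hEd
      obtain ⟨hne, e', he', ha, hb⟩ := hadj
      have hmap : Sym2.map (Subtype.val : ↥(D.supp) → V) s(a, b) = (e' : Sym2 V) := by
        rw [Sym2.map_pair_eq, ((Sym2.mem_and_mem_iff hne).mp ⟨ha, hb⟩)]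
      have : (⟨Sym2.map Subtype.val s(a, b), key1 _ hEd⟩ : G.edgeSet) = e' :=
        Subtype.ext hmap
      rw [this]; exact he'
  have key3 : ∀ (Ed : Sym2 ↥(D.supp)) (hEd : Ed ∈ T.edgeSet),
      (⟨⟨Ed.map Subtype.val, key1 Ed hEd⟩, Finset.mem_coe.mpr (key2 Ed hEd)⟩ :
        ↥(↑A : Set G.edgeSet)) ∈ c.supp := by
    intro Ed
    induction Ed using Sym2.ind with
    | _ a b =>
      intro hEd
      have ha' : (FA G A).Reachable a.1 u := SimpleGraph.ConnectedComponent.eq.mp a.2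
      obtain ⟨p⟩ := ha'
      have hmem : a.1 ∈ (Sym2.map (Subtype.val : ↥(D.supp) → V) s(a, b)) := by
        rw [Sym2.map_pair_eq]; exact Sym2.mem_mk_left _ _
      have := reach_from p (key2 _ hEd) he hmem hu
      exact SimpleGraph.ConnectedComponent.sound this
  -- the bijection
  let f : ↥(T.edgeSet) → ↥(c.supp) := fun Ed =>
    ⟨⟨⟨Ed.1.map Subtype.val, key1 Ed.1 Ed.2⟩, Finset.mem_coe.mpr (key2 Ed.1 Ed.2)⟩,
      key3 Ed.1 Ed.2⟩
  have hfbij : Function.Bijective f := by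
    constructor
    · intro Ed Ed' h
      apply Subtype.ext
      have : Ed.1.map Subtype.val = Ed'.1.map Subtype.val := by
        have := congrArg (fun x => ((x : ↥(↑A : Set G.edgeSet)) : G.edgeSet).1) (Subtype.ext_iff.mp h)
        exact this
      exact Sym2.map.injective Subtype.val_injective this
    · rintro ⟨⟨y, hyA⟩, hyc⟩
      -- y : G.edgeSet, hyA : y ∈ ↑A, hyc : component is c
      have hyA' : y ∈ A := Finset.mem_coe.mp hyA
      have hreach : (KG G A).Reachable ⟨y, hyA⟩ ⟨e, Finset.mem_coe.mpr he⟩ :=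
        SimpleGraph.ConnectedComponent.eq.mp hyc
      have hall : ∀ w ∈ (y : Sym2 V), w ∈ D.supp := by
        intro w hw
        obtain ⟨p⟩ := hreach
        exact SimpleGraph.ConnectedComponent.sound (reach_to p hw hu)
      obtain ⟨b0, hb0⟩ := Sym2.mem_iff_exists.mp (Sym2.out_fst_mem (y : Sym2 V))
      set a0 := (Quot.out (y : Sym2 V)).1 with ha0
      have ha0m : a0 ∈ (y : Sym2 V) := Sym2.out_fst_mem _
      have hb0m : b0 ∈ (y : Sym2 V) := by rw [hb0]; exact Sym2.mem_mk_right _ _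
      have hne : a0 ≠ b0 := by
        intro h
        exact G.not_isDiag_of_mem_edgeSet y.2 (by rw [hb0]; exact Sym2.mk_isDiag_iff.mpr h)
      have hadj : T.Adj ⟨a0, hall a0 ha0m⟩ ⟨b0, hall b0 hb0m⟩ := by
        show (FA G A).Adj a0 b0
        exact ⟨hne, y, hyA', ha0m, hb0m⟩
      refine ⟨⟨s(⟨a0, hall a0 ha0m⟩, ⟨b0, hall b0 hb0m⟩), T.mem_edgeSet.mpr hadj⟩, ?_⟩
      apply Subtype.ext
      apply Subtype.ext
      apply Subtype.ext
      show Sym2.map Subtype.val s(⟨a0, hall a0 ha0m⟩, ⟨b0, hall b0 hb0m⟩) = (y : Sym2 V)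
      rw [Sym2.map_pair_eq, hb0]
  have hcards : Nat.card ↥(T.edgeSet) = Nat.card ↥(c.supp) := Nat.card_eq_of_bijective f hfbij
  have hTe : Nat.card ↥(T.edgeSet) = T.edgeFinset.card := by
    rw [Nat.card_eq_fintype_card, SimpleGraph.edgeFinset, Set.toFinset_card]
  have hDs : Nat.card ↥(D.supp) = Fintype.card ↥(D.supp) := Nat.card_eq_fintype_card
  rw [← hcards, hTe, hDs]
  exact htree.card_edgeFinset
end Central
section Cases
open SimpleGraph
variable {V : Type*} [Fintype V] [DecidableEq V] {G : SimpleGraph V}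
set_option linter.unusedSectionVars false
set_option maxHeartbeats 1000000

/-- The set of edges of `G` with both endpoints in `s`. -/
noncomputable def Es (G : SimpleGraph V) (s : Finset V) : Finset G.edgeSet :=
  Finset.univ.filter (fun e => ∀ v ∈ (e : Sym2 V), v ∈ s)

lemma mem_Es {s : Finset V} {e : G.edgeSet} : e ∈ Es G s ↔ ∀ v ∈ (e : Sym2 V), v ∈ s := by
  simp [Es]

lemma subset_Es_of_spt {A : Finset G.edgeSet} {s : Finset V} (h : spt A ⊆ s) : A ⊆ Es G s := by
  intro e he
  exact mem_Es.mpr (fun v hv => h (mem_spt.mpr ⟨e, he, hv⟩))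

lemma spt_subset_of_subset_Es {A : Finset G.edgeSet} {s : Finset V} (h : A ⊆ Es G s) :
    spt A ⊆ s := by
  intro v hv
  obtain ⟨e, he, hve⟩ := mem_spt.mp hv
  exact mem_Es.mp (h he) v hve

lemma FA_closed {A : Finset G.edgeSet} {s : Finset V} (h : A ⊆ Es G s) :
    ∀ a b : V, (FA G A).Adj a b → a ∈ (↑s : Set V) ∧ b ∈ (↑s : Set V) := by
  rintro a b ⟨hne, e, he, ha, hb⟩
  exact ⟨mem_Es.mp (h he) a ha, mem_Es.mp (h he) b hb⟩

lemma induce_FA_Es (s : Finset V) :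
    (FA G (Es G s)).induce (↑s : Set V) = G.induce (↑s : Set V) := by
  ext ⟨a, ha⟩ ⟨b, hb⟩
  show (FA G (Es G s)).Adj a b ↔ G.Adj a b
  constructor
  · exact fun h => FA_le _ h
  · intro h
    refine ⟨h.ne, ⟨s(a, b), G.mem_edgeSet.mpr h⟩, ?_, Sym2.mem_mk_left _ _, Sym2.mem_mk_right _ _⟩
    refine mem_Es.mpr (fun v hv => ?_)
    rcases Sym2.mem_iff.mp hv with rfl | rfl
    · exact ha
    · exact hb

lemma card_supp_image_eq {W : Type*} {p : W → Prop} (S : Set (Subtype p)) :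
    Nat.card ↥(Subtype.val '' S) = Nat.card ↥S := by
  rw [Nat.card_coe_set_eq, Nat.card_coe_set_eq, Set.ncard_image_of_injective _ Subtype.val_injective]

lemma K_isOdd_of_even (hG : G.IsAcyclic) (s : Finset V) (hE : (G.induce (↑s : Set V)).IsEvenGraph) :
    (KG G (Es G s)).IsOddGraph := by
  intro c
  obtain ⟨x, hx⟩ := c.exists_rep
  have hxA : x.1 ∈ Es G s := Finset.mem_coe.mp x.2
  set u := (Quot.out (x.1 : Sym2 V)).1 with hu
  have hum : u ∈ (x.1 : Sym2 V) := Sym2.out_fst_mem _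
  have hus : u ∈ (↑s : Set V) := mem_Es.mp hxA u hum
  have hcard := card_component_eq hG hxA hum
  have hxx : (⟨x.1, Finset.mem_coe.mpr hxA⟩ : ↥(↑(Es G s) : Set G.edgeSet)) = x := Subtype.ext rfl
  have hx' : (KG G (Es G s)).connectedComponentMk x = c := hx
  rw [hxx, hx'] at hcard
  -- identify the FA-component with a component of G.induce s
  have himg := supp_image (FA G (Es G s)) (↑s : Set V) (FA_closed (le_refl _)) hus
  rw [induce_FA_Es s] at himg
  have heven : Even (Nat.card (((FA G (Es G s)).connectedComponentMk u).supp)) := by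
    rw [himg, card_supp_image_eq]
    exact hE _
  rw [← hcard] at heven
  rw [← Nat.not_even_iff_odd]
  intro hev
  rw [Nat.even_add_one] at heven
  exact heven hev

lemma K_not_odd (hG : G.IsAcyclic) (A : Finset G.edgeSet) (s : Finset V) (hspt : spt A = s)
    (hE : ¬ (G.induce (↑s : Set V)).IsEvenGraph) : ¬ (KG G A).IsOddGraph := by
  intro hK
  obtain ⟨C, hC⟩ := not_forall.mp hE
  have hle : (FA G A).induce (↑s : Set V) ≤ G.induce (↑s : Set V) := by
    intro a b hab
    exact FA_le A hab
  have hodd := (SimpleGraph.ConnectedComponent.odd_oddComponents_ncard_subset_supp _ hle C).mpr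
    (by rw [← Nat.card_coe_set_eq]; exact Nat.not_even_iff_odd.mp hC)
  have hpos : 0 < Nat.card ↥({c : ((FA G A).induce (↑s : Set V)).ConnectedComponent |
      c.supp ⊆ C.supp ∧ Odd (Nat.card ↥c.supp)}) := by
    obtain ⟨c₀, hc₀⟩ := Set.nonempty_of_ncard_ne_zero hodd.pos.ne'
    rw [Nat.card_pos_iff]
    exact ⟨⟨⟨c₀, hc₀.2, by rw [Nat.card_coe_set_eq]; exact hc₀.1⟩⟩, inferInstance⟩
  obtain ⟨⟨⟨c₀, hc₀⟩⟩, -⟩ := Nat.card_pos_iff.mp hpos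
  obtain ⟨⟨v, hvs⟩, hv⟩ := c₀.exists_rep
  -- v is covered by an edge of A
  have hvspt : v ∈ spt A := by rw [hspt]; exact Finset.mem_coe.mp hvs
  obtain ⟨e, heA, hve⟩ := mem_spt.mp hvspt
  -- the FA-component of v
  have himg := supp_image (FA G A) (↑s : Set V) (FA_closed (subset_Es_of_spt hspt.le)) hvs
  have hDodd : Odd (Nat.card (((FA G A).connectedComponentMk v).supp)) := by
    have hv' : ((FA G A).induce (↑s : Set V)).connectedComponentMk ⟨v, hvs⟩ = c₀ := hv
    rw [himg, card_supp_image_eq, hv']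
    exact hc₀.2
  have hcard := card_component_eq hG heA hve
  have := hK ((KG G A).connectedComponentMk ⟨e, Finset.mem_coe.mpr heA⟩)
  rw [← hcard] at hDodd
  rcases this with ⟨k, hk⟩
  rcases hDodd with ⟨m, hm⟩
  omega

lemma Es_nonempty (s : Finset V) (hs : s ≠ ∅) (hE : (G.induce (↑s : Set V)).IsEvenGraph) :
    Es G s ≠ ∅ := by
  obtain ⟨v, hv⟩ := Finset.nonempty_iff_ne_empty.mpr hs
  set Cv := (G.induce (↑s : Set V)).connectedComponentMk ⟨v, hv⟩ with hCv
  have hmem : (⟨v, hv⟩ : ↥(↑s : Set V)) ∈ Cv.supp := rfl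
  have hpos : 0 < Nat.card ↥Cv.supp := by
    haveI : Nonempty ↥Cv.supp := ⟨⟨_, hmem⟩⟩
    exact Nat.card_pos
  have heven := hE Cv
  have h1 : 1 < Cv.supp.ncard := by
    rw [← Nat.card_coe_set_eq]
    rcases heven with ⟨k, hk⟩
    omega
  obtain ⟨w, hw, hne⟩ := Set.exists_ne_of_one_lt_ncard h1 ⟨v, hv⟩
  have hreach : (G.induce (↑s : Set V)).Reachable w ⟨v, hv⟩ :=
    SimpleGraph.ConnectedComponent.eq.mp hw
  obtain ⟨p⟩ := hreach
  cases p with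
  | nil => exact absurd rfl hne
  | @cons a b c h q =>
    have hadj : G.Adj w.1 b.1 := h
    intro hcon
    have : (⟨s(w.1, b.1), G.mem_edgeSet.mpr hadj⟩ : G.edgeSet) ∈ Es G s := by
      refine mem_Es.mpr (fun x hx => ?_)
      rcases Sym2.mem_iff.mp hx with rfl | rfl
      · exact Finset.mem_coe.mp w.2
      · exact Finset.mem_coe.mp b.2
    rw [hcon] at this
    exact absurd this (Finset.notMem_empty _)
end Cases
section Main
open SimpleGraph
variable {V : Type*} [Fintype V] [DecidableEq V] {G : SimpleGraph V}
set_option linter.unusedSectionVars false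
set_option maxHeartbeats 1000000

noncomputable def Rsum (G : SimpleGraph V) (s : Finset V) : ℤ :=
  ∑ A ∈ (Es G s).powerset.filter (fun A => spt A = s), bNum G.lineGraph A

lemma sum_powerset_split {β : Type*} [AddCommMonoid β] (s : Finset V) (f : Finset V → β) :
    ∑ t ∈ s.powerset, f t = f s + ∑ t ∈ s.powerset.filter (· ≠ s), f t := by
  rw [Finset.filter_ne', ← Finset.add_sum_erase _ f (Finset.mem_powerset_self s)]

lemma Rsum_filter_eq {s t : Finset V} (hts : t ⊆ s) :
    (Es G t).powerset.filter (fun A => spt A = t) =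
      (Es G s).powerset.filter (fun A => spt A = t) := by
  ext A
  simp only [Finset.mem_filter, Finset.mem_powerset]
  constructor
  · rintro ⟨-, h⟩
    exact ⟨subset_Es_of_spt (by rw [h]; exact hts), h⟩
  · rintro ⟨-, h⟩
    exact ⟨subset_Es_of_spt h.le, h⟩

lemma aNum_eq_Rsum (hG : G.IsAcyclic) : ∀ (n : ℕ) (s : Finset V), s.card = n →
    aNum G s = Rsum G s := by
  intro n
  induction n using Nat.strong_induction_on with
  | _ n IH =>
    intro s hn
    by_cases hs : s = ∅
    · subst hs
      rw [aNum_empty, Rsum]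
      have hset : (Es G (∅ : Finset V)).powerset.filter (fun A => spt A = ∅) = {∅} := by
        ext A
        simp only [Finset.mem_filter, Finset.mem_powerset, Finset.mem_singleton]
        constructor
        · rintro ⟨-, h⟩; exact spt_eq_empty_iff.mp h
        · rintro rfl; exact ⟨Finset.empty_subset _, spt_empty⟩
      rw [hset, Finset.sum_singleton, bNum_empty]
    · by_cases hE : (G.induce (↑s : Set V)).IsEvenGraph
      · have h1 : ∑ A ∈ (Es G s).powerset, bNum G.lineGraph A = 0 :=
          sum_powerset_bNum G.lineGraph (Es G s) (Es_nonempty s hs hE) (K_isOdd_of_even hG s hE)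
        have h2 : ∑ t ∈ s.powerset, Rsum G t = ∑ A ∈ (Es G s).powerset, bNum G.lineGraph A := by
          rw [← Finset.sum_fiberwise_of_maps_to (g := spt)
            (fun A hA => Finset.mem_powerset.mpr (spt_subset_of_subset_Es
              (Finset.mem_powerset.mp hA))) (fun A => bNum G.lineGraph A)]
          apply Finset.sum_congr rfl
          intro t ht
          rw [Rsum, Rsum_filter_eq (Finset.mem_powerset.mp ht)]
        have h0 : ∑ t ∈ s.powerset, aNum G t = 0 := sum_powerset_aNum G s hs hE
        rw [sum_powerset_split s (aNum G)] at h0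
        rw [h1, sum_powerset_split s (Rsum G)] at h2
        have hrec : ∑ t ∈ s.powerset.filter (· ≠ s), aNum G t =
            ∑ t ∈ s.powerset.filter (· ≠ s), Rsum G t := by
          apply Finset.sum_congr rfl
          intro t ht
          simp only [Finset.mem_filter, Finset.mem_powerset] at ht
          exact IH t.card (hn ▸ Finset.card_lt_card (lt_of_le_of_ne ht.1 ht.2)) t rfl
        linarith
      · rw [aNum_of_not_even G s hs hE, Rsum]
        symm
        apply Finset.sum_eq_zero
        intro A hA
        simp only [Finset.mem_filter, Finset.mem_powerset] at hA
        have hA0 : A ≠ ∅ := fun h => hs (by rw [← hA.2, h, spt_empty])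
        exact bNum_of_not_odd G.lineGraph A hA0 (K_not_odd hG A s hA.2 hE)
end Main
section Final
open SimpleGraph
variable {V : Type*} [Fintype V] [DecidableEq V] {G : SimpleGraph V}
set_option linter.unusedSectionVars false
set_option maxHeartbeats 1000000

noncomputable def toEdges (G : SimpleGraph V) (H : SimpleGraph V) : Finset G.edgeSet :=
  Finset.univ.filter (fun e : G.edgeSet => (e : Sym2 V) ∈ H.edgeSet)

noncomputable def toGraph (G : SimpleGraph V) (A : Finset G.edgeSet) : SimpleGraph V :=
  SimpleGraph.fromEdgeSet (Subtype.val '' (↑A : Set G.edgeSet))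

lemma mem_toEdges {H : SimpleGraph V} {e : G.edgeSet} :
    e ∈ toEdges G H ↔ (e : Sym2 V) ∈ H.edgeSet := by simp [toEdges]

lemma toGraph_le (A : Finset G.edgeSet) : toGraph G A ≤ G := by
  intro v w hvw
  obtain ⟨⟨x, hx, heq⟩, hne⟩ := (SimpleGraph.fromEdgeSet_adj _).mp hvw
  exact G.mem_edgeSet.mp (heq ▸ x.2)

lemma toGraph_adj_of_spt (A : Finset G.edgeSet) (h : spt A = Finset.univ) (v : V) :
    ∃ w, (toGraph G A).Adj v w := by
  have hv : v ∈ spt A := h ▸ Finset.mem_univ v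
  obtain ⟨e, heA, hve⟩ := mem_spt.mp hv
  obtain ⟨w, hwe, hne, heq⟩ := exists_other e hve
  refine ⟨w, (SimpleGraph.fromEdgeSet_adj _).mpr ⟨⟨e, Finset.mem_coe.mpr heA, heq ▸ rfl⟩, hne⟩⟩

lemma spt_toEdges {H : SimpleGraph V} (hH : H ≤ G) (hcov : ∀ v, ∃ w, H.Adj v w) :
    spt (toEdges G H) = Finset.univ := by
  apply Finset.eq_univ_of_forall
  intro v
  obtain ⟨w, hw⟩ := hcov v
  have he : s(v, w) ∈ G.edgeSet := SimpleGraph.edgeSet_mono hH (H.mem_edgeSet.mpr hw)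
  exact mem_spt.mpr ⟨⟨s(v, w), he⟩, mem_toEdges.mpr (H.mem_edgeSet.mpr hw),
    Sym2.mem_mk_left _ _⟩

lemma toEdges_toGraph (A : Finset G.edgeSet) : toEdges G (toGraph G A) = A := by
  ext e
  rw [mem_toEdges, toGraph, SimpleGraph.edgeSet_fromEdgeSet]
  constructor
  · rintro ⟨⟨x, hx, heq⟩, -⟩
    rwa [← Subtype.val_injective heq]
  · intro he
    exact ⟨⟨e, Finset.mem_coe.mpr he, rfl⟩, G.not_isDiag_of_mem_edgeSet e.2⟩

lemma toGraph_toEdges {H : SimpleGraph V} (hH : H ≤ G) : toGraph G (toEdges G H) = H := by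
  ext v w
  rw [toGraph, SimpleGraph.fromEdgeSet_adj]
  constructor
  · rintro ⟨⟨x, hx, heq⟩, hne⟩
    have := mem_toEdges.mp (Finset.mem_coe.mp hx)
    rw [heq] at this
    exact H.mem_edgeSet.mp this
  · intro hadj
    refine ⟨⟨⟨s(v, w), SimpleGraph.edgeSet_mono hH (H.mem_edgeSet.mpr hadj)⟩, ?_, rfl⟩, hadj.ne⟩
    exact Finset.mem_coe.mpr (mem_toEdges.mpr (H.mem_edgeSet.mpr hadj))

lemma bNumber_lineGraph_eq {H : SimpleGraph V} (hH : H ≤ G) :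
    bNumber H.lineGraph = bNum G.lineGraph (toEdges G H) := by
  rw [bNumber]
  refine bNum_congr (Finset.univ : Finset ↥H.edgeSet).card H.lineGraph G.lineGraph
    (fun e => (⟨e.1, SimpleGraph.edgeSet_mono hH e.2⟩ : G.edgeSet)) Finset.univ (toEdges G H)
    rfl ?_ ?_ ?_
  · intro a _ b _ hab
    have h2 := congrArg (Subtype.val : G.edgeSet → Sym2 V) hab
    exact Subtype.ext h2
  · ext e
    simp only [Finset.mem_image, Finset.mem_univ, true_and, mem_toEdges]
    constructor
    · rintro ⟨a, rfl⟩
      exact a.2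
    · intro he
      exact ⟨⟨(e : Sym2 V), he⟩, Subtype.ext rfl⟩
  · intro a _ b _
    rw [SimpleGraph.lineGraph_adj_iff_exists, SimpleGraph.lineGraph_adj_iff_exists]
    constructor
    · rintro ⟨hne, v, hv1, hv2⟩
      refine ⟨fun h => hne ?_, v, hv1, hv2⟩
      have h2 := congrArg (Subtype.val : G.edgeSet → Sym2 V) h
      exact Subtype.ext h2
    · rintro ⟨hne, v, hv1, hv2⟩
      exact ⟨fun h => hne (by rw [h]), v, hv1, hv2⟩
end Final

/-- for any even forest `G`, `a(G) = ∑_{H ∈ S(G)} b(L(H))`, where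
`S(G)` is the set of spanning subgraphs of `G` without isolated vertices. -/
theorem aNumber_eq_sum_bNumber_lineGraph {V : Type*} [Fintype V] [DecidableEq V]
    (G : SimpleGraph V) (hG : G.IsAcyclic) (hE : G.IsEvenGraph) :
    aNumber G = ∑ H ∈ Finset.univ.filter
        (fun H : SimpleGraph V => H ≤ G ∧ ∀ v : V, ∃ w, H.Adj v w),
      bNumber H.lineGraph := by
  rw [aNumber, aNum_eq_Rsum hG Finset.univ.card Finset.univ rfl, Rsum]
  refine Finset.sum_nbij' (toGraph G) (toEdges G) ?_ ?_ ?_ ?_ ?_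
  · intro A hA
    simp only [Finset.mem_filter, Finset.mem_powerset] at hA
    simp only [Finset.mem_filter, Finset.mem_univ, true_and]
    exact ⟨toGraph_le A, toGraph_adj_of_spt A hA.2⟩
  · intro H hH
    simp only [Finset.mem_filter, Finset.mem_univ, true_and] at hH
    simp only [Finset.mem_filter, Finset.mem_powerset]
    refine ⟨subset_Es_of_spt ?_, spt_toEdges hH.1 hH.2⟩
    rw [spt_toEdges hH.1 hH.2]
  · intro A hA
    exact toEdges_toGraph A
  · intro H hH
    simp only [Finset.mem_filter, Finset.mem_univ, true_and] at hH
    exact toGraph_toEdges hH.1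
  · intro A hA
    simp only [Finset.mem_filter, Finset.mem_powerset] at hA
    rw [bNumber_lineGraph_eq (toGraph_le A), toEdges_toGraph A]
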